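/- Let r ≥ 1 be an integer and let G be a connected subcubic simple graph containing at least one vertex of degree 3. Then there is a locally surjective homomorphism from G to the complete graph K_4 if and only if there is a locally surjective homomorphism from the r-subdivision G^r to the r-subdivision K_4^r. -/

import Mathlib

/-- Representatives of internal vertices of the `k`-subdivision of `G`:
a dart `d` of `G` together with a position `i : Fin k`; the pair `(d, i)` is
identified with `(d.symm, k - 1 - i)`. -/
def SubdivRep {V : Type*} (G : SimpleGraph V) (k : ℕ) :
    G.Dart × Fin k → G.Dart × Fin k → Prop :=
  fun a b => b.1 = a.1.symm ∧ (b.2 : ℕ) = k - 1 - (a.2 : ℕ)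

/-- Internal vertices of the `k`-subdivision of `G`. -/
abbrev SubdivInternal {V : Type*} (G : SimpleGraph V) (k : ℕ) :=
  Quot (SubdivRep G k)

/-- Vertices of the `k`-subdivision of `G`: the branch vertices (`Sum.inl`)
are the original vertices of `G`, and `Sum.inr` are the internal vertices. -/
abbrev SubdivVertex {V : Type*} (G : SimpleGraph V) (k : ℕ) :=
  V ⊕ SubdivInternal G k

/-- One-directional adjacency for the `k`-subdivision: a branch vertex `u` is
adjacent to the first internal vertex of any edge of `G` leaving `u` (via the
identification, also to the last internal vertex of any edge entering `u`),
and consecutive internal vertices on a subdivided edge are adjacent. -/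
def SubdivAdjBase {V : Type*} (G : SimpleGraph V) (k : ℕ) :
    SubdivVertex G k → SubdivVertex G k → Prop
  | Sum.inl u, Sum.inr x =>
      ∃ (d : G.Dart) (i : Fin k), (i : ℕ) = 0 ∧ d.toProd.1 = u ∧
        x = Quot.mk (SubdivRep G k) (d, i)
  | Sum.inr x, Sum.inr y =>
      ∃ (d : G.Dart) (i j : Fin k), (j : ℕ) = (i : ℕ) + 1 ∧
        x = Quot.mk (SubdivRep G k) (d, i) ∧ y = Quot.mk (SubdivRep G k) (d, j)
  | _, _ => False

/-- The `k`-subdivision of a simple graph `G`: every edge `uv` of `G` is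
replaced by a path from `u` to `v` through `k` new internal vertices. -/
def Subdivision {V : Type*} (G : SimpleGraph V) (k : ℕ) :
    SimpleGraph (SubdivVertex G k) where
  Adj x y := x ≠ y ∧ (SubdivAdjBase G k x y ∨ SubdivAdjBase G k y x)
  symm := ⟨fun x y h => ⟨Ne.symm h.1, h.2.symm⟩⟩
  loopless := ⟨fun x h => h.1 rfl⟩

/-- A homomorphism `f : G →g H` is locally bijective if for every vertex `u`
the restriction of `f` to the open neighbourhood of `u`, viewed as a map into
the open neighbourhood of `f u`, is a bijection. -/
def GraphHomLocallyBijective {V W : Type*} {G : SimpleGraph V} {H : SimpleGraph W}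
    (f : G →g H) : Prop :=
  ∀ u : V, Set.BijOn f (G.neighborSet u) (H.neighborSet (f u))

/-- A homomorphism `f : G →g H` is locally surjective if for every vertex `u`
the restriction of `f` to the open neighbourhood of `u`, viewed as a map into
the open neighbourhood of `f u`, is surjective. -/
def GraphHomLocallySurjective {V W : Type*} {G : SimpleGraph V} {H : SimpleGraph W}
    (f : G →g H) : Prop :=
  ∀ u : V, Set.SurjOn f (G.neighborSet u) (H.neighborSet (f u))

/-- A homomorphism `f : G →g H` is locally injective if for every vertex `u`
the restriction of `f` to the open neighbourhood of `u`, viewed as a map into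
the open neighbourhood of `f u`, is injective. -/
def GraphHomLocallyInjective {V W : Type*} {G : SimpleGraph V} {H : SimpleGraph W}
    (f : G →g H) : Prop :=
  ∀ u : V, Set.InjOn f (G.neighborSet u)

/-!
A locally surjective `f : G →g H` subdivides edge by edge into a locally surjective
`G^r →g H^r`. Conversely, let `F : G^r →g H^r` be locally surjective, where every vertex of `H`
(here `K₄`) has at least three neighbours. An internal vertex has only two neighbours, so it
cannot be sent to a branch vertex; as the image of `F` is closed under adjacency, some branch
vertex is nevertheless sent to a branch vertex. If `F u = c` are branch vertices and `uv` is an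
edge, `F` sends the first internal vertex on `uv` to the first internal vertex on some edge
`cc'`, and local surjectivity at the internal vertices, which have degree two on both sides,
forces `F` to follow `cc'` to its end: `F v = c'`. By connectedness `F` therefore restricts to a
map `G → H` on branch vertices, which is a locally surjective homomorphism.
-/

theorem subdivRep_iff {V : Type*} {G : SimpleGraph V} {k : ℕ} {a b : G.Dart × Fin k} :
    SubdivRep G k a b ↔ b = (a.1.symm, a.2.rev) := by
  simp only [SubdivRep, Prod.ext_iff, Fin.ext_iff, Fin.val_rev]
  exact and_congr_right fun _ => by omega

namespace SubdivInternal

variable {V : Type*} {G : SimpleGraph V} {k : ℕ}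

abbrev mk (d : G.Dart) (i : Fin k) : SubdivInternal G k := Quot.mk (SubdivRep G k) (d, i)

theorem mk_symm_rev (d : G.Dart) (i : Fin k) : mk d.symm i.rev = mk d i :=
  (Quot.sound (subdivRep_iff (a := (d, i)) |>.mpr rfl)).symm

theorem mk_eq_mk_iff {d e : G.Dart} {i j : Fin k} :
    mk d i = mk e j ↔ (e = d ∧ j = i) ∨ (e = d.symm ∧ j = i.rev) := by
  let flip : G.Dart × Fin k → G.Dart × Fin k := fun a => (a.1.symm, a.2.rev)
  have hflip : ∀ a, flip (flip a) = a := fun a => by simp [flip]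
  have hequiv : Equivalence fun a b => b = a ∨ b = flip a := by
    refine ⟨fun a => .inl rfl, ?_, ?_⟩
    · rintro a b (rfl | rfl)
      exacts [.inl rfl, .inr (hflip a).symm]
    · rintro a b c (rfl | rfl) (rfl | rfl)
      exacts [.inl rfl, .inr rfl, .inr rfl, .inl (hflip a)]
  constructor
  · intro h
    have := hequiv.eqvGen_iff.mp <| Relation.EqvGen.mono
      (fun a b h => .inr (subdivRep_iff.mp h)) _ _ (Quot.eqvGen_exact h)
    simpa only [Prod.ext_iff] using this
  · rintro (⟨rfl, rfl⟩ | ⟨rfl, rfl⟩)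
    exacts [rfl, (mk_symm_rev d i).symm]

end SubdivInternal

theorem GraphHomLocallySurjective.exists_apply_eq_of_reachable {V W : Type*}
    {G : SimpleGraph V} {H : SimpleGraph W} {f : G →g H} (hf : GraphHomLocallySurjective f)
    {x : V} {y : W} (h : H.Reachable (f x) y) : ∃ x', f x' = y := by
  rw [SimpleGraph.reachable_iff_reflTransGen] at h
  induction h with
  | refl => exact ⟨x, rfl⟩
  | tail _ hadj ih =>
    obtain ⟨x', rfl⟩ := ih
    obtain ⟨z, -, hz⟩ := hf x' hadj
    exact ⟨z, hz⟩

namespace Subdivision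

open SimpleGraph SubdivInternal

variable {V W : Type*} {G : SimpleGraph V} {H : SimpleGraph W} {k : ℕ}

/-- The vertices `0, 1, …, k + 2` of the path replacing the edge `d` in the `(k + 1)`-subdivision,
walked from `d.fst` to `d.snd`; indices beyond `k + 2` also give `d.snd`. -/
def pathVertex (k : ℕ) (d : G.Dart) : ℕ → SubdivVertex G (k + 1)
  | 0 => .inl d.fst
  | j + 1 => if h : j < k + 1 then .inr (mk d ⟨j, h⟩) else .inl d.snd

@[simp]
theorem pathVertex_zero (d : G.Dart) : pathVertex k d 0 = .inl d.fst := rfl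

theorem pathVertex_succ (d : G.Dart) {j : ℕ} (h : j < k + 1) :
    pathVertex k d (j + 1) = .inr (mk d ⟨j, h⟩) :=
  dif_pos h

@[simp]
theorem pathVertex_last (d : G.Dart) : pathVertex k d (k + 2) = .inl d.snd :=
  dif_neg (by omega)

theorem pathVertex_symm (d : G.Dart) {j : ℕ} (hj : j ≤ k + 2) :
    pathVertex k d.symm j = pathVertex k d (k + 2 - j) := by
  rcases j with _ | j
  · simp [Dart.symm]
  · rcases Nat.lt_or_ge j (k + 1) with hjk | hjk
    · rw [pathVertex_succ _ hjk, show k + 2 - (j + 1) = (k - j) + 1 by omega,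
        pathVertex_succ _ (by omega), ← mk_symm_rev d]
      congr 2
      ext
      simp only [Fin.val_rev]
      omega
    · obtain rfl : j = k + 1 := by omega
      simp [pathVertex, Dart.symm]

theorem pathVertex_succ_eq_pathVertex_succ_iff {d e : G.Dart} {i j : ℕ} (hi : i ≤ k)
    (hj : j ≤ k) : pathVertex k d (i + 1) = pathVertex k e (j + 1) ↔
      (e = d ∧ j = i) ∨ (e = d.symm ∧ j = k - i) := by
  rw [pathVertex_succ _ (by omega), pathVertex_succ _ (by omega), Sum.inr.injEq, mk_eq_mk_iff]
  simp only [Fin.ext_iff, Fin.val_rev, show k + 1 - (i + 1) = k - i by omega]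

theorem adj_pathVertex_succ (d : G.Dart) {j : ℕ} (hj : j ≤ k + 1) :
    (Subdivision G (k + 1)).Adj (pathVertex k d j) (pathVertex k d (j + 1)) := by
  have adj_of_le : ∀ (d : G.Dart) (j : ℕ), j ≤ k →
      (Subdivision G (k + 1)).Adj (pathVertex k d j) (pathVertex k d (j + 1)) := by
    intro d j hj
    rcases j with _ | j
    · rw [pathVertex_zero, pathVertex_succ _ (by omega)]
      exact ⟨Sum.inl_ne_inr, .inl ⟨d, 0, rfl, rfl, rfl⟩⟩
    · refine ⟨?_, .inl ?_⟩
      · rw [Ne, pathVertex_succ_eq_pathVertex_succ_iff (by omega) (by omega)]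
        rintro (⟨-, h⟩ | ⟨h, -⟩)
        exacts [by omega, d.symm_ne h.symm]
      · rw [pathVertex_succ _ (by omega), pathVertex_succ _ (by omega)]
        exact ⟨d, ⟨j, by omega⟩, ⟨j + 1, by omega⟩, rfl, rfl, rfl⟩
  rcases Nat.lt_or_ge j (k + 1) with hjk | hjk
  · exact adj_of_le d j (by omega)
  · obtain rfl : j = k + 1 := by omega
    -- the last edge of the path along `d` is the first one along `d.symm`
    have h := adj_of_le d.symm 0 (by omega)
    rw [pathVertex_symm _ (by omega), pathVertex_symm _ (by omega)] at h
    exact h.symm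

theorem adj_iff_exists_pathVertex {x y : SubdivVertex G (k + 1)} :
    (Subdivision G (k + 1)).Adj x y ↔ ∃ (d : G.Dart) (j : ℕ), j ≤ k + 1 ∧
      x = pathVertex k d j ∧ y = pathVertex k d (j + 1) := by
  have of_base : ∀ x y, SubdivAdjBase G (k + 1) x y → ∃ (d : G.Dart) (j : ℕ),
      j ≤ k + 1 ∧ x = pathVertex k d j ∧ y = pathVertex k d (j + 1) := by
    rintro (u | x) (v | y) h
    · exact h.elim
    · obtain ⟨d, ⟨i, hik⟩, rfl, rfl, rfl⟩ := h
      exact ⟨d, 0, by omega, rfl, (pathVertex_succ d hik).symm⟩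
    · exact h.elim
    · obtain ⟨d, i, ⟨i', hik⟩, rfl, rfl, rfl⟩ := h
      exact ⟨d, i + 1, by omega, (pathVertex_succ d i.isLt).symm, (pathVertex_succ d hik).symm⟩
  constructor
  · rintro ⟨-, h | h⟩
    · exact of_base x y h
    · obtain ⟨d, j, hj, rfl, rfl⟩ := of_base y x h
      refine ⟨d.symm, k + 1 - j, by omega, ?_, ?_⟩ <;>
        rw [pathVertex_symm _ (by omega)] <;> congr 1 <;> omega
  · rintro ⟨d, j, hj, rfl, rfl⟩
    exact adj_pathVertex_succ d hj

theorem neighborSet_pathVertex_succ (d : G.Dart) {i : ℕ} (hi : i ≤ k) :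
    (Subdivision G (k + 1)).neighborSet (pathVertex k d (i + 1)) =
      {pathVertex k d i, pathVertex k d (i + 2)} := by
  ext z
  simp only [mem_neighborSet, Set.mem_insert_iff, Set.mem_singleton_iff]
  constructor
  · intro h
    obtain ⟨e, j, hj, hde, rfl⟩ := adj_iff_exists_pathVertex.mp h
    rcases j with _ | j
    · simp [pathVertex_succ _ (by omega : i < k + 1)] at hde
    · rcases (pathVertex_succ_eq_pathVertex_succ_iff hi (by omega)).mp hde with
        ⟨rfl, rfl⟩ | ⟨rfl, rfl⟩
      · exact .inr rfl
      · left
        rw [pathVertex_symm _ (by omega)]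
        congr 1
        omega
  · rintro (rfl | rfl)
    exacts [(adj_pathVertex_succ d (by omega)).symm, adj_pathVertex_succ d (by omega)]

theorem neighborSet_inl (u : V) :
    (Subdivision G (k + 1)).neighborSet (.inl u) =
      (fun d => pathVertex k d 1) '' {d : G.Dart | d.fst = u} := by
  ext z
  simp only [mem_neighborSet, Set.mem_image, Set.mem_ofPred_eq]
  constructor
  · intro h
    obtain ⟨d, j, hj, hd, rfl⟩ := adj_iff_exists_pathVertex.mp h
    rcases j with _ | j
    · exact ⟨d, (Sum.inl.inj hd).symm, rfl⟩
    · simp [pathVertex_succ _ (by omega : j < k + 1)] at hd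
  · rintro ⟨d, rfl, rfl⟩
    exact adj_pathVertex_succ (j := 0) d k.succ.zero_le

theorem pathVertex_ne_pathVertex_add_two (d : G.Dart) {i : ℕ} (hi : i ≤ k) :
    pathVertex k d i ≠ pathVertex k d (i + 2) := by
  have start : ∀ d : G.Dart, pathVertex k d 0 ≠ pathVertex k d 2 := by
    intro d
    rcases k with _ | k
    · rw [pathVertex_zero, pathVertex_last, Ne, Sum.inl.injEq]
      exact d.adj.ne
    · rw [pathVertex_succ _ (by omega)]
      exact Sum.inl_ne_inr
  rcases i with _ | i
  · exact start d
  rcases Nat.lt_or_ge (i + 1) k with hik | hik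
  · rw [Ne, pathVertex_succ_eq_pathVertex_succ_iff (by omega) (by omega)]
    rintro (⟨-, h⟩ | ⟨h, -⟩)
    exacts [by omega, d.symm_ne h.symm]
  · obtain rfl : k = i + 1 := by omega
    have h1 : pathVertex (i + 1) d (i + 1) = pathVertex (i + 1) d.symm 2 := by
      rw [pathVertex_symm _ (by omega), Nat.add_sub_cancel]
    have h2 : pathVertex (i + 1) d (i + 1 + 2) = pathVertex (i + 1) d.symm 0 := by
      rw [pathVertex_symm _ (by omega), Nat.sub_zero]
    rw [h1, h2]
    exact (start d.symm).symm

theorem injOn_pathVertex_one (u : V) :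
    Set.InjOn (fun d => pathVertex k d 1) {d : G.Dart | d.fst = u} := by
  intro d hd e he h
  rcases (pathVertex_succ_eq_pathVertex_succ_iff (i := 0) (j := 0) k.zero_le k.zero_le).mp h with
    ⟨rfl, -⟩ | ⟨rfl, -⟩
  · rfl
  · exact absurd (hd.trans he.symm) d.adj.ne

theorem encard_neighborSet_inl (u : V) :
    ((Subdivision G (k + 1)).neighborSet (.inl u)).encard = (G.neighborSet u).encard := by
  have hN : G.neighborSet u = (fun d : G.Dart => d.snd) '' {d | d.fst = u} := by
    ext v
    exact ⟨fun h => ⟨⟨(u, v), h⟩, rfl, rfl⟩, by rintro ⟨d, rfl, rfl⟩; exact d.adj⟩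
  have hsnd : Set.InjOn (fun d : G.Dart => d.snd) {d | d.fst = u} :=
    fun d hd e he h => Dart.ext _ _ (Prod.ext (hd.trans he.symm) h)
  rw [neighborSet_inl, (injOn_pathVertex_one u).encard_image, hN, hsnd.encard_image]

theorem reachable_pathVertex (d : G.Dart) {j : ℕ} (hj : j ≤ k + 2) :
    (Subdivision G (k + 1)).Reachable (.inl d.fst) (pathVertex k d j) := by
  induction j with
  | zero => rfl
  | succ j ih => exact (ih (by omega)).trans (adj_pathVertex_succ d (by omega)).reachable

def mapVertex (f : G →g H) : SubdivVertex G k → SubdivVertex H k :=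
  Sum.map f <| Quot.lift (fun a => mk (f.mapDart a.1) a.2) fun a b h => by
    rw [subdivRep_iff.mp h]
    exact (mk_symm_rev (f.mapDart a.1) a.2).symm

theorem mapVertex_pathVertex (f : G →g H) (d : G.Dart) (j : ℕ) :
    mapVertex f (pathVertex k d j) = pathVertex k (f.mapDart d) j := by
  rcases j with _ | j
  · rfl
  · simp only [pathVertex]
    split_ifs <;> rfl

def map (f : G →g H) : Subdivision G (k + 1) →g Subdivision H (k + 1) where
  toFun := mapVertex f
  map_rel' h := by
    obtain ⟨d, j, hj, rfl, rfl⟩ := adj_iff_exists_pathVertex.mp h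
    rw [mapVertex_pathVertex, mapVertex_pathVertex]
    exact adj_pathVertex_succ _ hj

theorem map_pathVertex (f : G →g H) (d : G.Dart) (j : ℕ) :
    map f (pathVertex k d j) = pathVertex k (f.mapDart d) j :=
  mapVertex_pathVertex f d j

theorem locallySurjective_map {f : G →g H} (hf : GraphHomLocallySurjective f) :
    GraphHomLocallySurjective (map (k := k) f) := by
  rintro (u | w)
  · show Set.SurjOn _ _ ((Subdivision H (k + 1)).neighborSet (.inl (f u)))
    rw [neighborSet_inl (f u)]
    rintro _ ⟨e, he, rfl⟩
    have he : e.fst = f u := he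
    obtain ⟨v, huv, hfv⟩ := hf u (he ▸ e.adj)
    refine ⟨pathVertex k ⟨(u, v), huv⟩ 1, ?_, ?_⟩
    · rw [neighborSet_inl]
      exact ⟨_, rfl, rfl⟩
    rw [map_pathVertex]
    congr
    exact Dart.ext _ _ (Prod.ext he.symm hfv)
  · obtain ⟨⟨d, ⟨i, hi⟩⟩, rfl⟩ := Quot.exists_rep w
    rw [← pathVertex_succ d hi, map_pathVertex, neighborSet_pathVertex_succ _ (by omega),
      neighborSet_pathVertex_succ _ (by omega)]
    convert Set.surjOn_image (map f) {pathVertex k d i, pathVertex k d (i + 2)} using 1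
    rw [Set.image_pair, map_pathVertex, map_pathVertex]

section Lift

variable {F : Subdivision G (k + 1) →g Subdivision H (k + 1)}

theorem apply_inr_ne_inl (hH : ∀ w, 3 ≤ (H.neighborSet w).encard)
    (hF : GraphHomLocallySurjective F) (x : SubdivInternal G (k + 1)) (c : W) :
    F (.inr x) ≠ .inl c := by
  obtain ⟨⟨d, ⟨i, hi⟩⟩, rfl⟩ := Quot.exists_rep x
  intro hc
  have hsub := hF (pathVertex k d (i + 1))
  rw [neighborSet_pathVertex_succ _ (by omega), pathVertex_succ d hi, hc] at hsub
  have : (3 : ℕ∞) ≤ 2 := calc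
    (3 : ℕ∞) ≤ (H.neighborSet c).encard := hH c
    _ = ((Subdivision H (k + 1)).neighborSet (.inl c)).encard := (encard_neighborSet_inl c).symm
    _ ≤ (F '' {pathVertex k d i, pathVertex k d (i + 2)}).encard := Set.encard_le_encard hsub
    _ ≤ ({pathVertex k d i, pathVertex k d (i + 2)} : Set _).encard := Set.encard_image_le _ _
    _ ≤ 2 := (Set.encard_insert_le _ _).trans (by norm_num)
  exact absurd this (by decide)

theorem exists_apply_inl_eq_inl [Nonempty V] (hH : ∀ w, 3 ≤ (H.neighborSet w).encard)
    (hF : GraphHomLocallySurjective F) : ∃ u c, F (.inl u) = .inl c := by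
  obtain ⟨u⟩ := ‹Nonempty V›
  rcases hFu : F (.inl u) with c | w
  · exact ⟨u, c, hFu⟩
  obtain ⟨⟨e, ⟨i, hi⟩⟩, rfl⟩ := Quot.exists_rep w
  have hreach : (Subdivision H (k + 1)).Reachable (F (.inl u)) (.inl e.fst) := by
    rw [hFu, ← pathVertex_succ e hi]
    exact (reachable_pathVertex e (by omega)).symm
  obtain ⟨u' | x, hx⟩ := GraphHomLocallySurjective.exists_apply_eq_of_reachable hF hreach
  · exact ⟨u', _, hx⟩
  · exact absurd hx (apply_inr_ne_inl hH hF x _)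

theorem exists_dart_apply_pathVertex_one {d : G.Dart} {c : W} (hc : F (.inl d.fst) = .inl c) :
    ∃ e : H.Dart, e.fst = c ∧ F (pathVertex k d 1) = pathVertex k e 1 := by
  have h := F.map_adj (adj_pathVertex_succ (j := 0) d k.succ.zero_le)
  rw [pathVertex_zero, hc, ← mem_neighborSet, neighborSet_inl] at h
  obtain ⟨e, he, h⟩ := h
  exact ⟨e, he, h.symm⟩

theorem apply_pathVertex_eq (hF : GraphHomLocallySurjective F) {d : G.Dart} {e : H.Dart}
    (h0 : F (.inl d.fst) = .inl e.fst) (h1 : F (pathVertex k d 1) = pathVertex k e 1)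
    {j : ℕ} (hj : j ≤ k + 2) : F (pathVertex k d j) = pathVertex k e j := by
  suffices h : ∀ j ≤ k + 1, F (pathVertex k d j) = pathVertex k e j ∧
      F (pathVertex k d (j + 1)) = pathVertex k e (j + 1) by
    rcases j with _ | j
    exacts [h0, (h j (by omega)).2]
  intro j hj
  induction j with
  | zero => exact ⟨h0, h1⟩
  | succ j ih =>
    obtain ⟨hj0, hj1⟩ := ih (by omega)
    refine ⟨hj1, ?_⟩
    have hmem : pathVertex k e (j + 2) ∈
        (Subdivision H (k + 1)).neighborSet (F (pathVertex k d (j + 1))) := by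
      rw [hj1, neighborSet_pathVertex_succ _ (by omega)]
      exact .inr rfl
    obtain ⟨z, hz, hFz⟩ := hF _ hmem
    rw [neighborSet_pathVertex_succ _ (by omega)] at hz
    rcases hz with rfl | rfl
    · exact absurd (hj0.symm.trans hFz) (pathVertex_ne_pathVertex_add_two e (by omega))
    · exact hFz

theorem apply_inl_snd_eq (hF : GraphHomLocallySurjective F) {d : G.Dart} {e : H.Dart}
    (h0 : F (.inl d.fst) = .inl e.fst) (h1 : F (pathVertex k d 1) = pathVertex k e 1) :
    F (.inl d.snd) = .inl e.snd := by
  simpa using apply_pathVertex_eq hF h0 h1 le_rfl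

theorem exists_dart_apply_inl_snd_eq (hF : GraphHomLocallySurjective F) {d : G.Dart} {c : W}
    (hc : F (.inl d.fst) = .inl c) : ∃ e : H.Dart, e.fst = c ∧ F (.inl d.snd) = .inl e.snd := by
  obtain ⟨e, rfl, he⟩ := exists_dart_apply_pathVertex_one hc
  exact ⟨e, rfl, apply_inl_snd_eq hF hc he⟩

theorem exists_apply_inl_eq_inl_of_preconnected (hG : G.Preconnected)
    (hF : GraphHomLocallySurjective F) {u₀ : V} {c₀ : W} (h₀ : F (.inl u₀) = .inl c₀)
    (u : V) : ∃ c, F (.inl u) = .inl c := by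
  have h := hG u₀ u
  rw [reachable_iff_reflTransGen] at h
  induction h with
  | refl => exact ⟨c₀, h₀⟩
  | @tail v w _ hvw ih =>
    obtain ⟨c, hc⟩ := ih
    obtain ⟨e, -, he⟩ := exists_dart_apply_inl_snd_eq (d := ⟨(v, w), hvw⟩) hF hc
    exact ⟨e.snd, he⟩

theorem exists_locallySurjective_of_subdivision (hG : G.Connected)
    (hH : ∀ w, 3 ≤ (H.neighborSet w).encard) (hF : GraphHomLocallySurjective F) :
    ∃ f : G →g H, GraphHomLocallySurjective f := by
  have := hG.nonempty
  obtain ⟨u₀, c₀, h₀⟩ := exists_apply_inl_eq_inl hH hF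
  choose f hf using exists_apply_inl_eq_inl_of_preconnected hG.preconnected hF h₀
  refine ⟨⟨f, fun {u v} huv => ?_⟩, fun u c hc => ?_⟩
  · obtain ⟨e, he, hev⟩ := exists_dart_apply_inl_snd_eq (d := ⟨(u, v), huv⟩) hF (hf u)
    rw [hf v, Sum.inl.injEq] at hev
    exact he ▸ hev ▸ e.adj
  · let e : H.Dart := ⟨(f u, c), hc⟩
    have hmem : pathVertex k e 1 ∈ (Subdivision H (k + 1)).neighborSet (F (.inl u)) := by
      rw [hf u, neighborSet_inl]
      exact ⟨e, rfl, rfl⟩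
    obtain ⟨z, hz, hFz⟩ := hF _ hmem
    rw [neighborSet_inl] at hz
    obtain ⟨d, rfl, rfl⟩ := hz
    have hd := apply_inl_snd_eq hF (hf d.fst) hFz
    exact ⟨d.snd, d.adj, Sum.inl.inj ((hf d.snd).symm.trans hd)⟩

end Lift

theorem exists_locallySurjective_iff (hG : G.Connected)
    (hH : ∀ w, 3 ≤ (H.neighborSet w).encard) :
    (∃ f : G →g H, GraphHomLocallySurjective f) ↔
      ∃ F : Subdivision G (k + 1) →g Subdivision H (k + 1), GraphHomLocallySurjective F :=
  ⟨fun ⟨f, hf⟩ => ⟨map f, locallySurjective_map hf⟩,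
    fun ⟨_, hF⟩ => exists_locallySurjective_of_subdivision hG hH hF⟩

end Subdivision

theorem statement4_general {V : Type*} (G : SimpleGraph V)
    (r : ℕ) (hr : 1 ≤ r) (hconn : G.Connected) :
    (∃ f : G →g SimpleGraph.completeGraph (Fin 4), GraphHomLocallySurjective f) ↔
      (∃ f : Subdivision G r →g Subdivision (SimpleGraph.completeGraph (Fin 4)) r,
        GraphHomLocallySurjective f) := by
  obtain ⟨k, rfl⟩ := Nat.exists_eq_add_of_le' hr
  refine Subdivision.exists_locallySurjective_iff hconn fun c => ?_
  simp [SimpleGraph.neighborSet_top, Set.encard_eq_coe_toFinset_card, Finset.card_compl]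

/-- Let `r ≥ 1` and let `G` be a connected subcubic graph with at least one
vertex of degree 3.  Then there is a locally surjective homomorphism from `G`
to `K₄` if and only if there is one from `G^r` to `K₄^r`. -/
theorem statement4 {V : Type*} [Fintype V] (G : SimpleGraph V)
    [DecidableRel G.Adj] (r : ℕ) (hr : 1 ≤ r) (hconn : G.Connected)
    (hcubic : ∀ v : V, G.degree v ≤ 3) (hdeg3 : ∃ v : V, G.degree v = 3) :
    (∃ f : G →g SimpleGraph.completeGraph (Fin 4), GraphHomLocallySurjective f) ↔
      (∃ f : Subdivision G r →g Subdivision (SimpleGraph.completeGraph (Fin 4)) r,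
        GraphHomLocallySurjective f) :=
  statement4_general G r hr hconn
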